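/- arXiv:1411.3869 — 3 statements merged into one kernel-verified Lean document; each statement's English description precedes it below -/
import Mathlib

section
/- Let z₀, z₁, z₂ ∈ ℂ be pairwise distinct and all nonzero with z₀ + z₁ + z₂ = 0, and suppose the three moduli |z₀|, |z₁|, |z₂| are not all equal. Then the maximal distance from a vertex to the centroid strictly decreases under the triangle transformation: max_{i=0,1,2} |z′ᵢ| < max_{i=0,1,2} |zᵢ|. -/
/-!
Write `a, b, c` for the moduli of `z i, z (i+1), z (i+2)` and `M` for the largest of them. The
three vectors sum to zero, so their inner products are functions of `a, b, c`, and
`9abc ‖z′ᵢ‖² = stepNormSqPoly a b c` is a quintic in the moduli. In the coordinates formed by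
the two gaps between `M` and the other moduli and the slack of the triangle inequality at `M`,
the difference `9M²abc - stepNormSqPoly a b c` exceeds a positive multiple of
`(3M - a - b - c)²` by a polynomial with nonnegative coefficients, and `3M - a - b - c > 0`
unless `a = b = c`.
-/

/-- The ratio `rᵢ = |z_{i-1}| / |z_i|` of distances from the vertices to the
centroid (assumed to be the origin). -/
noncomputable def triRatio (z : ZMod 3 → ℂ) (i : ZMod 3) : ℝ :=
  ‖z (i - 1)‖ / ‖z i‖

/-- One step of the triangle transformation (centroid at the origin):
`z′ᵢ = (2/3) rᵢ zᵢ − (1/3) r_{i+1} z_{i+1} − (1/3) r_{i+2} z_{i+2}`. -/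
noncomputable def triStep (z : ZMod 3 → ℂ) (i : ZMod 3) : ℂ :=
  (2 / 3 : ℂ) * (triRatio z i : ℝ) * z i
    - (1 / 3 : ℂ) * (triRatio z (i + 1) : ℝ) * z (i + 1)
    - (1 / 3 : ℂ) * (triRatio z (i + 2) : ℝ) * z (i + 2)

theorem norm_le_norm_add_norm_of_add_add_eq_zero {E : Type*} [SeminormedAddCommGroup E]
    {u v w : E} (h : u + v + w = 0) : ‖u‖ ≤ ‖v‖ + ‖w‖ := by
  rw [eq_neg_of_add_eq_zero_left (by rw [← h]; abel : u + (v + w) = 0), norm_neg]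
  exact norm_add_le v w

theorem norm_sq_smul_add_smul_add_smul_of_add_add_eq_zero {E : Type*} [NormedAddCommGroup E]
    [InnerProductSpace ℝ E] {u v w : E} (h : u + v + w = 0) (α β γ : ℝ) :
    ‖α • u + β • v + γ • w‖ ^ 2 = (α - β) * (α - γ) * ‖u‖ ^ 2
      + (β - α) * (β - γ) * ‖v‖ ^ 2 + (γ - α) * (γ - β) * ‖w‖ ^ 2 := by
  obtain rfl : w = -(u + v) := eq_neg_of_add_eq_zero_right h
  have hw : ‖-(u + v)‖ ^ 2 = ‖u‖ ^ 2 + 2 * inner ℝ u v + ‖v‖ ^ 2 := by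
    rw [norm_neg, norm_add_sq_real]
  have hlhs : α • u + β • v + γ • -(u + v) = (α - γ) • u + (β - γ) • v := by
    simp only [smul_neg, smul_add, sub_smul]
    abel
  rw [hw, hlhs, norm_add_sq_real, norm_smul, norm_smul, inner_smul_left, inner_smul_right,
    mul_pow, mul_pow, Real.norm_eq_abs, Real.norm_eq_abs, sq_abs, sq_abs, conj_trivial]
  ring

def stepNormSqPoly (a b c : ℝ) : ℝ :=
  a * (a ^ 2 + 2 * b * c) * (a * b + 2 * c ^ 2) - b * (a ^ 2 + 2 * b * c) * (b ^ 2 - a * c)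
    + c * (a * b + 2 * c ^ 2) * (b ^ 2 - a * c)

theorem stepNormSqPoly_lt_of_max_left {a b c : ℝ} (hb : 0 < b) (hc : 0 < c) (hba : b ≤ a)
    (hca : c ≤ a) (hbc : a ≤ b + c) (hne : ¬(b = a ∧ c = a)) :
    stepNormSqPoly a b c < 9 * a ^ 2 * (a * b * c) := by
  have hs : 0 < 2 * a - b - c := by
    by_contra!
    exact hne ⟨by linarith, by linarith⟩
  have hdefect :
      b ^ 2 * c * (2 * a - b - c) ^ 2 ≤ 9 * a ^ 2 * (a * b * c) - stepNormSqPoly a b c := by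
    obtain ⟨x, y, z, rfl, rfl, rfl, hx, hy, hz⟩ : ∃ x y z : ℝ,
        a = x + y + z ∧ b = y + z ∧ c = x + z ∧ 0 ≤ x ∧ 0 ≤ y ∧ 0 ≤ z :=
      ⟨a - b, a - c, b + c - a, by ring, by ring, by ring, by linarith, by linarith, by linarith⟩
    rw [← sub_nonneg, stepNormSqPoly]
    ring_nf
    positivity
  have : 0 < b ^ 2 * c * (2 * a - b - c) ^ 2 := by positivity
  linarith

theorem stepNormSqPoly_lt_of_max_mid {a b c : ℝ} (ha : 0 < a) (hc : 0 < c) (hab : a ≤ b)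
    (hcb : c ≤ b) (hac : b ≤ a + c) (hne : ¬(a = b ∧ c = b)) :
    stepNormSqPoly a b c < 9 * b ^ 2 * (a * b * c) := by
  have hs : 0 < 2 * b - a - c := by
    by_contra!
    exact hne ⟨by linarith, by linarith⟩
  have hdefect :
      c ^ 2 * a * (2 * b - a - c) ^ 2 ≤ 9 * b ^ 2 * (a * b * c) - stepNormSqPoly a b c := by
    obtain ⟨x, y, z, rfl, rfl, rfl, hx, hy, hz⟩ : ∃ x y z : ℝ,
        a = y + z ∧ b = x + y + z ∧ c = x + z ∧ 0 ≤ x ∧ 0 ≤ y ∧ 0 ≤ z :=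
      ⟨b - a, b - c, a + c - b, by ring, by ring, by ring, by linarith, by linarith, by linarith⟩
    rw [← sub_nonneg, stepNormSqPoly]
    ring_nf
    positivity
  have : 0 < c ^ 2 * a * (2 * b - a - c) ^ 2 := by positivity
  linarith

theorem stepNormSqPoly_lt_of_max_right {a b c : ℝ} (ha : 0 < a) (hb : 0 < b) (hac : a ≤ c)
    (hbc : b ≤ c) (hab : c ≤ a + b) (hne : ¬(a = c ∧ b = c)) :
    stepNormSqPoly a b c < 9 * c ^ 2 * (a * b * c) := by
  have hs : 0 < 2 * c - a - b := by
    by_contra!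
    exact hne ⟨by linarith, by linarith⟩
  have hdefect :
      a ^ 2 * b * (2 * c - a - b) ^ 2 ≤ 9 * c ^ 2 * (a * b * c) - stepNormSqPoly a b c := by
    obtain ⟨x, y, z, rfl, rfl, rfl, hx, hy, hz⟩ : ∃ x y z : ℝ,
        a = y + z ∧ b = x + z ∧ c = x + y + z ∧ 0 ≤ x ∧ 0 ≤ y ∧ 0 ≤ z :=
      ⟨c - a, c - b, a + b - c, by ring, by ring, by ring, by linarith, by linarith, by linarith⟩
    rw [← sub_nonneg, stepNormSqPoly]
    ring_nf
    positivity
  have : 0 < a ^ 2 * b * (2 * c - a - b) ^ 2 := by positivity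
  linarith

theorem stepNormSqPoly_lt {a b c : ℝ} (ha : 0 < a) (hb : 0 < b) (hc : 0 < c)
    (hab : c ≤ a + b) (hbc : a ≤ b + c) (hca : b ≤ c + a) (hne : ¬(a = b ∧ b = c)) :
    stepNormSqPoly a b c < 9 * max (max a b) c ^ 2 * (a * b * c) := by
  rcases max_choice (max a b) c with hM | hM <;> rw [hM]
  · rcases max_choice a b with hM' | hM' <;> rw [hM'] at hM ⊢
    · have hmax := max_eq_left_iff.1 hM'
      exact stepNormSqPoly_lt_of_max_left hb hc hmax (max_eq_left_iff.1 hM) hbc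
        fun h => hne ⟨h.1.symm, h.1.trans h.2.symm⟩
    · have hmax := max_eq_right_iff.1 hM'
      exact stepNormSqPoly_lt_of_max_mid ha hc hmax (max_eq_left_iff.1 hM) (by linarith)
        fun h => hne ⟨h.1, h.2.symm⟩
  · have hmax := max_eq_right_iff.1 hM
    exact stepNormSqPoly_lt_of_max_right ha hb ((le_max_left a b).trans hmax)
      ((le_max_right a b).trans hmax) hab fun h => hne ⟨h.1.trans h.2.symm, h.2⟩

theorem norm_triangleStep_lt_max {E : Type*} [NormedAddCommGroup E] [InnerProductSpace ℝ E]
    {u v w : E} (hu : u ≠ 0) (hv : v ≠ 0) (hw : w ≠ 0) (h : u + v + w = 0)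
    (hne : ¬(‖u‖ = ‖v‖ ∧ ‖v‖ = ‖w‖)) :
    ‖(2 / 3 * (‖w‖ / ‖u‖)) • u - (1 / 3 * (‖u‖ / ‖v‖)) • v - (1 / 3 * (‖v‖ / ‖w‖)) • w‖
      < max (max ‖u‖ ‖v‖) ‖w‖ := by
  have ha := norm_pos_iff.2 hu
  have hb := norm_pos_iff.2 hv
  have hc := norm_pos_iff.2 hw
  have hsq : 9 * (‖u‖ * ‖v‖ * ‖w‖) * ‖(2 / 3 * (‖w‖ / ‖u‖)) • u - (1 / 3 * (‖u‖ / ‖v‖)) • v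
      - (1 / 3 * (‖v‖ / ‖w‖)) • w‖ ^ 2 = stepNormSqPoly ‖u‖ ‖v‖ ‖w‖ := by
    rw [sub_eq_add_neg, sub_eq_add_neg, ← neg_smul, ← neg_smul,
      norm_sq_smul_add_smul_add_smul_of_add_add_eq_zero h, stepNormSqPoly]
    field_simp
    ring
  have hlt := stepNormSqPoly_lt ha hb hc
    (norm_le_norm_add_norm_of_add_add_eq_zero (by rw [← h]; abel))
    (norm_le_norm_add_norm_of_add_add_eq_zero h)
    (norm_le_norm_add_norm_of_add_add_eq_zero (by rw [← h]; abel)) hne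
  have habc : 0 < 9 * (‖u‖ * ‖v‖ * ‖w‖) := by positivity
  refine lt_of_pow_lt_pow_left₀ 2 (ha.le.trans ((le_max_left _ _).trans (le_max_left _ _))) ?_
  exact lt_of_mul_lt_mul_left (by linarith) habc.le

theorem triStep_eq (z : ZMod 3 → ℂ) (i : ZMod 3) :
    triStep z i = (2 / 3 * (‖z (i + 2)‖ / ‖z i‖)) • z i
      - (1 / 3 * (‖z i‖ / ‖z (i + 1)‖)) • z (i + 1)
      - (1 / 3 * (‖z (i + 1)‖ / ‖z (i + 2)‖)) • z (i + 2) := by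
  have h0 : i - 1 = i + 2 := by revert i; decide
  have h2 : i + 2 - 1 = i + 1 := by ring
  simp only [triStep, triRatio, h0, h2, add_sub_cancel_right, Complex.real_smul]
  push_cast
  ring

theorem triangle_transformation_max_strict_decrease_general (z : ZMod 3 → ℂ)
    (h0 : ∀ i, z i ≠ 0)
    (hsum : z 0 + z 1 + z 2 = 0)
    (hne : ¬(‖z 0‖ = ‖z 1‖ ∧
        ‖z 1‖ = ‖z 2‖)) :
    max (max (‖triStep z 0‖) (‖triStep z 1‖))
        (‖triStep z 2‖)
      < max (max (‖z 0‖) (‖z 1‖)) (‖z 2‖) := by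
  set M := max (max ‖z 0‖ ‖z 1‖) ‖z 2‖
  have hle : ∀ j, ‖z j‖ ≤ M := by
    intro j
    fin_cases j
    exacts [(le_max_left _ _).trans (le_max_left _ _), (le_max_right _ _).trans (le_max_left _ _),
      le_max_right _ _]
  have hvertex : ∀ i, z i + z (i + 1) + z (i + 2) = 0 →
      ¬(‖z i‖ = ‖z (i + 1)‖ ∧ ‖z (i + 1)‖ = ‖z (i + 2)‖) → ‖triStep z i‖ < M := by
    intro i hs hn
    rw [triStep_eq]
    exact (norm_triangleStep_lt_max (h0 _) (h0 _) (h0 _) hs hn).trans_le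
      (max_le (max_le (hle _) (hle _)) (hle _))
  have hZ3 : (1 : ZMod 3) + 2 = 0 ∧ (2 : ZMod 3) + 1 = 0 ∧ (2 : ZMod 3) + 2 = 1 := by decide
  refine max_lt (max_lt (hvertex 0 ?_ ?_) (hvertex 1 ?_ ?_)) (hvertex 2 ?_ ?_) <;>
    simp only [hZ3, zero_add, one_add_one_eq_two] <;> grind

/-- For a non-degenerate triangle with centroid at the origin whose vertex moduli
are not all equal, the maximal distance from a vertex to the centroid strictly
decreases under the triangle transformation. -/
theorem triangle_transformation_max_strict_decrease (z : ZMod 3 → ℂ)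
    (hinj : Function.Injective z) (h0 : ∀ i, z i ≠ 0)
    (hsum : z 0 + z 1 + z 2 = 0)
    (hne : ¬(‖z 0‖ = ‖z 1‖ ∧
        ‖z 1‖ = ‖z 2‖)) :
    max (max (‖triStep z 0‖) (‖triStep z 1‖))
        (‖triStep z 2‖)
      < max (max (‖z 0‖) (‖z 1‖)) (‖z 2‖) :=
  triangle_transformation_max_strict_decrease_general z h0 hsum hne
end

section
/- Characterization of fixed points of the triangle transformation: let z₀, z₁, z₂ ∈ ℂ be pairwise distinct and all nonzero with z₀ + z₁ + z₂ = 0. Then the triangle is a fixed point of the transformation (z′ᵢ = zᵢ for all i) if and only if the distances from the vertices to the centroid are all equal, i.e. |z₀| = |z₁| = |z₂|. -/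
lemma eq_and_eq_of_abs_sub_eq_abs_sub {a b c : ℝ} (hca : |c - a| = |a - b|)
    (hab : |a - b| = |b - c|) : a = b ∧ b = c := by
  rcases abs_eq_abs.mp hca with h | h <;> rcases abs_eq_abs.mp hab with h' | h' <;>
    constructor <;> linarith

namespace ZMod

lemma add_add_one_add_two {M : Type*} [AddCommMonoid M] (f : ZMod 3 → M) (i : ZMod 3) :
    f i + f (i + 1) + f (i + 2) = f 0 + f 1 + f 2 := by
  fin_cases i
  · rfl
  · show f 1 + f 2 + f 0 = _
    abel
  · show f 2 + f 0 + f 1 = _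
    abel

end ZMod

section

variable {z : ZMod 3 → ℂ}

lemma triStep_sub_triStep_add_one (i : ZMod 3) :
    triStep z i - triStep z (i + 1) = triRatio z i * z i - triRatio z (i + 1) * z (i + 1) := by
  have h3 : i + 1 + 2 = i := by
    rw [add_assoc, show (1 + 2 : ZMod 3) = 0 from rfl, add_zero]
  simp only [triStep, h3, add_assoc, show (1 + 1 : ZMod 3) = 2 from rfl]
  ring

lemma norm_triRatio_sub_one_mul {i : ZMod 3} (hz : z i ≠ 0) :
    ‖((triRatio z i : ℂ) - 1) * z i‖ = |‖z (i - 1)‖ - ‖z i‖| := by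
  have hpos : 0 < ‖z i‖ := norm_pos_iff.mpr hz
  rw [← Complex.ofReal_one, ← Complex.ofReal_sub, norm_mul, Complex.norm_real, Real.norm_eq_abs,
    triRatio, div_sub_one hpos.ne', abs_div, abs_of_pos hpos, div_mul_cancel₀ _ hpos.ne']

lemma triRatio_eq_one {i : ZMod 3} (hz : z i ≠ 0) (h : ‖z (i - 1)‖ = ‖z i‖) :
    triRatio z i = 1 := by
  rw [triRatio, h, div_self (norm_ne_zero_iff.mpr hz)]

lemma triStep_of_triRatio_eq_one (h : ∀ i, triRatio z i = 1) (i : ZMod 3) :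
    triStep z i = z i - (z 0 + z 1 + z 2) / 3 := by
  rw [← ZMod.add_add_one_add_two z i, triStep, h, h, h]
  push_cast
  ring

end

theorem triangle_transformation_fixed_point_iff_equidistant_general (z : ZMod 3 → ℂ)
    (h0 : ∀ i, z i ≠ 0)
    (hsum : z 0 + z 1 + z 2 = 0) :
    (∀ i : ZMod 3, triStep z i = z i) ↔
      (‖z 0‖ = ‖z 1‖ ∧
        ‖z 1‖ = ‖z 2‖) := by
  constructor
  · intro hfix
    have hcyc : ∀ i, |‖z (i - 1)‖ - ‖z i‖| = |‖z i‖ - ‖z (i + 1)‖| := by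
      intro i
      have hw : ((triRatio z i : ℂ) - 1) * z i = ((triRatio z (i + 1) : ℂ) - 1) * z (i + 1) := by
        linear_combination hfix i - hfix (i + 1) - triStep_sub_triStep_add_one (z := z) i
      have := congrArg norm hw
      rwa [norm_triRatio_sub_one_mul (h0 i), norm_triRatio_sub_one_mul (h0 (i + 1)),
        add_sub_cancel_right] at this
    exact eq_and_eq_of_abs_sub_eq_abs_sub (hcyc 0) (hcyc 1)
  · rintro ⟨h01, h12⟩
    have hr : ∀ i, triRatio z i = 1 := by
      intro i
      refine triRatio_eq_one (h0 i) ?_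
      fin_cases i
      · exact (h01.trans h12).symm
      · exact h01
      · exact h12
    intro i
    rw [triStep_of_triRatio_eq_one hr, hsum, zero_div, sub_zero]

/-- A non-degenerate triangle with centroid at the origin is a fixed point of the
triangle transformation if and only if its vertices are equidistant from the
centroid. -/
theorem triangle_transformation_fixed_point_iff_equidistant (z : ZMod 3 → ℂ)
    (hinj : Function.Injective z) (h0 : ∀ i, z i ≠ 0)
    (hsum : z 0 + z 1 + z 2 = 0) :
    (∀ i : ZMod 3, triStep z i = z i) ↔
      (‖z 0‖ = ‖z 1‖ ∧
        ‖z 1‖ = ‖z 2‖) :=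
  triangle_transformation_fixed_point_iff_equidistant_general z h0 hsum
end

section
/- Let x₀, x₁, x₂, x₃ ∈ ℝ² be pairwise distinct points with x₀ + x₁ + x₂ + x₃ = 0 and ‖x₀‖ = ‖x₁‖ = ‖x₂‖ = ‖x₃‖. Then, up to a change of indices, the points form two antipodal pairs: (x₀ = −x₁ and x₂ = −x₃), or (x₀ = −x₂ and x₁ = −x₃), or (x₀ = −x₃ and x₁ = −x₂). -/
/-!
Write `s = a + b = -(c + d)`. Equal norms make `a - b` and `c - d` both orthogonal to `s`, and the
parallelogram law gives `‖a - b‖ = ‖c - d‖`. In the plane the orthogonal complement of `s ≠ 0` is a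
line, so `c - d = ±(a - b)`; together with `c + d = -(a + b)` this pairs each of `c, d` with the
antipode of one of `a, b`.
-/

open Module
open scoped InnerProductSpace

lemma eq_or_eq_neg_of_smul_eq_of_norm_eq {F : Type*} [NormedAddCommGroup F] [NormedSpace ℝ F]
    {u w : F} {c : ℝ} (hw : w ≠ 0) (hcw : c • w = u) (hnorm : ‖u‖ = ‖w‖) : u = w ∨ u = -w := by
  have hc : |c| = 1 := by
    rw [← hcw, norm_smul, Real.norm_eq_abs] at hnorm
    exact (mul_eq_right₀ (norm_ne_zero_iff.mpr hw)).mp hnorm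
  rcases abs_eq (zero_le_one' ℝ) |>.mp hc with rfl | rfl
  · exact .inl (by simpa using hcw.symm)
  · exact .inr (by simpa using hcw.symm)

variable {E : Type*} [NormedAddCommGroup E] [InnerProductSpace ℝ E]

lemma eq_or_eq_neg_of_inner_eq_zero_of_norm_eq [Fact (finrank ℝ E = 2)] {s u v : E} (hs : s ≠ 0)
    (hu : ⟪s, u⟫_ℝ = 0) (hv : ⟪s, v⟫_ℝ = 0) (hnorm : ‖u‖ = ‖v‖) : u = v ∨ u = -v := by
  rcases eq_or_ne v 0 with rfl | hv0
  · exact .inl (norm_eq_zero.mp (by simpa using hnorm))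
  obtain ⟨c, hc⟩ := Submodule.mem_span_singleton.mp
    (Submodule.mem_span_singleton_of_inner_eq_zero_of_inner_eq_zero hs hv0 hu hv)
  exact eq_or_eq_neg_of_smul_eq_of_norm_eq hv0 hc hnorm

lemma inner_add_sub_eq_zero_of_add_add_add_eq_zero {a b c d : E} (hsum : a + b + c + d = 0)
    (hcd : ‖c‖ = ‖d‖) : ⟪a + b, c - d⟫_ℝ = 0 := by
  have h := (real_inner_add_sub_eq_zero_iff c d).mpr hcd
  rwa [show c + d = -(a + b) by linear_combination (norm := module) hsum, inner_neg_left,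
    neg_eq_zero] at h

lemma norm_sub_eq_norm_sub_of_add_add_add_eq_zero {a b c d : E} (hsum : a + b + c + d = 0)
    (hab : ‖a‖ = ‖b‖) (hac : ‖a‖ = ‖c‖) (had : ‖a‖ = ‖d‖) : ‖a - b‖ = ‖c - d‖ := by
  have hcd : ‖c + d‖ = ‖a + b‖ := by
    rw [← norm_neg, show -(c + d) = a + b by linear_combination (norm := module) -hsum]
  have hpar_ab := parallelogram_law_with_norm ℝ a b
  have hpar_cd := parallelogram_law_with_norm ℝ c d
  rw [← hab] at hpar_ab
  rw [← hac, ← had, hcd] at hpar_cd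
  exact (pow_left_inj₀ (norm_nonneg _) (norm_nonneg _) two_ne_zero).mp (by linarith)

theorem eq_neg_pairs_of_add_add_add_eq_zero_of_norm_eq [Fact (finrank ℝ E = 2)] {a b c d : E}
    (hsum : a + b + c + d = 0) (hab : ‖a‖ = ‖b‖) (hac : ‖a‖ = ‖c‖) (had : ‖a‖ = ‖d‖) :
    (a = -b ∧ c = -d) ∨ (a = -c ∧ b = -d) ∨ (a = -d ∧ b = -c) := by
  rcases eq_or_ne (a + b) 0 with hs | hs
  · exact .inl ⟨eq_neg_of_add_eq_zero_left hs,
      eq_neg_of_add_eq_zero_left (by linear_combination (norm := module) hsum - hs)⟩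
  have hperp : ⟪a + b, a - b⟫_ℝ = 0 := (real_inner_add_sub_eq_zero_iff a b).mpr hab
  rcases eq_or_eq_neg_of_inner_eq_zero_of_norm_eq hs
      (inner_add_sub_eq_zero_of_add_add_add_eq_zero hsum (hac.symm.trans had)) hperp
      (norm_sub_eq_norm_sub_of_add_add_add_eq_zero hsum hab hac had).symm with h | h
  · refine .inr (.inr ⟨?_, ?_⟩)
    · linear_combination (norm := module) (1 / 2 : ℝ) • (hsum - h)
    · linear_combination (norm := module) (1 / 2 : ℝ) • (hsum + h)
  · refine .inr (.inl ⟨?_, ?_⟩)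
    · linear_combination (norm := module) (1 / 2 : ℝ) • (hsum + h)
    · linear_combination (norm := module) (1 / 2 : ℝ) • (hsum - h)

theorem equidistant_quadrilateral_antipodal_pairs_general
    (x : Fin 4 → EuclideanSpace ℝ (Fin 2))
    (hsum : x 0 + x 1 + x 2 + x 3 = 0)
    (hnorm : ‖x 0‖ = ‖x 1‖ ∧ ‖x 1‖ = ‖x 2‖ ∧ ‖x 2‖ = ‖x 3‖) :
    (x 0 = -x 1 ∧ x 2 = -x 3) ∨ (x 0 = -x 2 ∧ x 1 = -x 3) ∨
      (x 0 = -x 3 ∧ x 1 = -x 2) := by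
  obtain ⟨h01, h12, h23⟩ := hnorm
  have : Fact (finrank ℝ (EuclideanSpace ℝ (Fin 2)) = 2) := ⟨finrank_euclideanSpace_fin⟩
  exact eq_neg_pairs_of_add_add_add_eq_zero_of_norm_eq hsum h01 (h01.trans h12)
    (h01.trans (h12.trans h23))

/-- Four pairwise distinct points in the plane with centroid at the origin and
equal distances to the origin form two antipodal pairs (up to a change of
indices). -/
theorem equidistant_quadrilateral_antipodal_pairs
    (x : Fin 4 → EuclideanSpace ℝ (Fin 2))
    (hinj : Function.Injective x)
    (hsum : x 0 + x 1 + x 2 + x 3 = 0)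
    (hnorm : ‖x 0‖ = ‖x 1‖ ∧ ‖x 1‖ = ‖x 2‖ ∧ ‖x 2‖ = ‖x 3‖) :
    (x 0 = -x 1 ∧ x 2 = -x 3) ∨ (x 0 = -x 2 ∧ x 1 = -x 3) ∨
      (x 0 = -x 3 ∧ x 1 = -x 2) :=
  equidistant_quadrilateral_antipodal_pairs_general x hsum hnorm
end
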